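/- Every partially ordered set is order-isomorphic to the set of nonzero J-classes of G(E), ordered by ≤_J, for some directed graph E. -/

import Mathlib

universe u

/-- A directed graph: vertices, edges, source and range maps. -/
structure DGraph : Type (u + 1) where
  V : Type u
  Ed : Type u
  src : Ed → V
  rng : Ed → V

/-- The end vertex of a list of edges started at `v` (ignoring composability). -/
def DGraph.ranAux (G : DGraph) : G.V → List G.Ed → G.V
  | v, [] => v
  | _, e :: es => DGraph.ranAux G (G.rng e) es

/-- The edges `l` form a composable path starting at `v`. -/
def DGraph.Chain (G : DGraph) : G.V → List G.Ed → Prop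
  | _, [] => True
  | v, e :: es => G.src e = v ∧ DGraph.Chain G (G.rng e) es

theorem DGraph.ranAux_append (G : DGraph) (v : G.V) (l1 l2 : List G.Ed) :
    G.ranAux v (l1 ++ l2) = G.ranAux (G.ranAux v l1) l2 := by
  induction l1 generalizing v with
  | nil => rfl
  | cons e es ih => exact ih (G.rng e)

theorem DGraph.chain_append (G : DGraph) {v : G.V} {l1 l2 : List G.Ed}
    (h1 : G.Chain v l1) (h2 : G.Chain (G.ranAux v l1) l2) : G.Chain v (l1 ++ l2) := by
  induction l1 generalizing v with
  | nil => exact h2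
  | cons e es ih => exact ⟨h1.1, ih h1.2 h2⟩

theorem DGraph.chain_append_right (G : DGraph) {v : G.V} {l1 l2 : List G.Ed}
    (h : G.Chain v (l1 ++ l2)) : G.Chain (G.ranAux v l1) l2 := by
  induction l1 generalizing v with
  | nil => exact h
  | cons e es ih => exact ih h.2

/-- A (finite, directed) path in the graph `G`: a start vertex together
with a composable list of edges. Vertices are the paths of length `0`. -/
structure GPath (G : DGraph.{u}) : Type u where
  start : G.V
  edges : List G.Ed
  chain : G.Chain start edges

namespace GPath

variable {G : DGraph}

/-- The range (end vertex) of a path. -/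
def ran (p : GPath G) : G.V := G.ranAux p.start p.edges

/-- The path of length zero at a vertex. -/
def ofVertex (G : DGraph) (v : G.V) : GPath G := ⟨v, [], trivial⟩

/-- The path of length one given by an edge. -/
def ofEdge (G : DGraph) (e : G.Ed) : GPath G := ⟨G.src e, [e], ⟨rfl, trivial⟩⟩

@[simp] theorem ofVertex_ran (G : DGraph) (v : G.V) : (ofVertex G v).ran = v := rfl

@[simp] theorem ofEdge_ran (G : DGraph) (e : G.Ed) : (ofEdge G e).ran = G.rng e := rfl

/-- Concatenation of composable paths. -/
def append (p q : GPath G) (h : p.ran = q.start) : GPath G :=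
  ⟨p.start, p.edges ++ q.edges,
    G.chain_append p.chain (by
      show G.Chain (G.ranAux p.start p.edges) q.edges
      have : G.ranAux p.start p.edges = q.start := h
      rw [this]; exact q.chain)⟩

@[simp] theorem append_ran (p q : GPath G) (h : p.ran = q.start) :
    (p.append q h).ran = q.ran := by
  show G.ranAux p.start (p.edges ++ q.edges) = q.ran
  rw [G.ranAux_append]
  have : G.ranAux p.start p.edges = q.start := h
  rw [this]; rfl

/-- `y` is an initial segment of the path `p`. -/
def IsPrefixOf (y p : GPath G) : Prop := y.start = p.start ∧ y.edges <+: p.edges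

/-- The remainder `t` of `p` after its initial segment `y`, so that `p = y ++ t`. -/
def remainder (y p : GPath G) (h : y.IsPrefixOf p) : GPath G :=
  ⟨y.ran, p.edges.drop y.edges.length, by
    obtain ⟨l2, hl⟩ := h.2
    rw [← hl, List.drop_left]
    show G.Chain (G.ranAux y.start y.edges) l2
    rw [h.1]
    exact G.chain_append_right (v := p.start) (l1 := y.edges) (l2 := l2)
      (by rw [hl]; exact p.chain)⟩

@[simp] theorem remainder_ran (y p : GPath G) (h : y.IsPrefixOf p) :
    (y.remainder p h).ran = p.ran := by
  obtain ⟨l2, hl⟩ := h.2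
  show G.ranAux y.ran (p.edges.drop y.edges.length) = p.ran
  rw [← hl, List.drop_left]
  show G.ranAux (G.ranAux y.start y.edges) l2 = p.ran
  rw [h.1, ← G.ranAux_append, hl]
  rfl

end GPath

/-- The graph inverse semigroup of `G` (in normal form): its elements are zero together
with the elements `x * y⁻¹` for paths `x`, `y` with the same range. -/
inductive GIS (G : DGraph.{u}) : Type u where
  | zero : GIS G
  | mk (x y : GPath G) (h : x.ran = y.ran) : GIS G

instance (G : DGraph) : Zero (GIS G) := ⟨GIS.zero⟩

open scoped Classical in
/-- Multiplication in the graph inverse semigroup. -/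
noncomputable def GIS.gmul {G : DGraph} : GIS G → GIS G → GIS G
  | GIS.zero, _ => GIS.zero
  | GIS.mk _ _ _, GIS.zero => GIS.zero
  | GIS.mk x y hxy, GIS.mk p q hpq =>
    if h1 : y.IsPrefixOf p then
      GIS.mk (x.append (y.remainder p h1) hxy) q
        (by exact (GPath.append_ran _ _ _).trans ((GPath.remainder_ran _ _ _).trans hpq))
    else if h2 : p.IsPrefixOf y then
      GIS.mk x (q.append (p.remainder y h2) hpq.symm)
        (by exact hxy.trans ((GPath.append_ran _ _ _).trans (GPath.remainder_ran _ _ _)).symm)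
    else GIS.zero

noncomputable instance (G : DGraph) : Mul (GIS G) := ⟨GIS.gmul⟩

/-- The element of `GIS G` corresponding to a vertex `v` (i.e. `v = v * v⁻¹`). -/
def vertexEl (G : DGraph) (v : G.V) : GIS G :=
  GIS.mk (GPath.ofVertex G v) (GPath.ofVertex G v) rfl

/-- The element of `GIS G` corresponding to an edge `e` (i.e. `e = e * r(e)⁻¹`). -/
def edgeEl (G : DGraph) (e : G.Ed) : GIS G :=
  GIS.mk (GPath.ofEdge G e) (GPath.ofVertex G (G.rng e)) rfl

/-- The inverse operation on `GIS G`: `(x y⁻¹)⁻¹ = y x⁻¹`. -/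
def GIS.inv {G : DGraph} : GIS G → GIS G
  | GIS.zero => GIS.zero
  | GIS.mk x y h => GIS.mk y x h.symm

/-- `a` lies in the principal left ideal generated by `b` (`S¹a ⊆ S¹b`). -/
def GreenLeL {G : DGraph} (a b : GIS G) : Prop := a = b ∨ ∃ c, a = c * b

/-- `a` lies in the principal right ideal generated by `b` (`aS¹ ⊆ bS¹`). -/
def GreenLeR {G : DGraph} (a b : GIS G) : Prop := a = b ∨ ∃ c, a = b * c

/-- `a` lies in the principal two-sided ideal generated by `b` (`S¹aS¹ ⊆ S¹bS¹`). -/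
def GreenLeJ {G : DGraph} (a b : GIS G) : Prop :=
  a = b ∨ (∃ c, a = c * b) ∨ (∃ c, a = b * c) ∨ (∃ c d, a = c * b * d)

/-- Green's `L`-relation. -/
def GreenEqL {G : DGraph} (a b : GIS G) : Prop := GreenLeL a b ∧ GreenLeL b a

/-- Green's `R`-relation. -/
def GreenEqR {G : DGraph} (a b : GIS G) : Prop := GreenLeR a b ∧ GreenLeR b a

/-- Green's `J`-relation. -/
def GreenEqJ {G : DGraph} (a b : GIS G) : Prop := GreenLeJ a b ∧ GreenLeJ b a

/-- There is a (possibly trivial) directed path from `v` to `w` in `G`. -/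
def GConnected (G : DGraph) (v w : G.V) : Prop := ∃ t : GPath G, t.start = v ∧ t.ran = w

/-- `I` is a (two-sided) ideal of `GIS G`. -/
def GISIdeal {G : DGraph} (I : Set (GIS G)) : Prop :=
  ∀ a ∈ I, ∀ c : GIS G, a * c ∈ I ∧ c * a ∈ I

/-- `R` is the Rees congruence of some ideal `I`, i.e. `R = (I × I) ∪ Δ`. -/
def IsReesCon {G : DGraph} (R : Con (GIS G)) : Prop :=
  ∃ I : Set (GIS G), GISIdeal I ∧ ∀ a b : GIS G, R a b ↔ (a ∈ I ∧ b ∈ I) ∨ a = b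

/-- The only congruences on `GIS G` are the universal one and the diagonal. -/
def CongFree (G : DGraph) : Prop :=
  ∀ R : Con (GIS G), (∀ a b : GIS G, R a b) ∨ (∀ a b : GIS G, R a b ↔ a = b)

/-- The natural partial order on the inverse semigroup `GIS G`:
`a ≤ b` iff `a = ε * b` for some idempotent `ε`. -/
def natLe {G : DGraph} (a b : GIS G) : Prop := ∃ ε : GIS G, ε * ε = ε ∧ a = ε * b

/-- The graph obtained from `G` by deleting the vertices in `S` and all
edges incident to them. -/
def DGraph.delete (G : DGraph) (S : Set G.V) : DGraph where
  V := {v : G.V // v ∉ S}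
  Ed := {e : G.Ed // G.src e ∉ S ∧ G.rng e ∉ S}
  src e := ⟨G.src e.1, e.2.1⟩
  rng e := ⟨G.rng e.1, e.2.2⟩

/-- The graph with a single vertex and `n` loops; its graph inverse semigroup
is the polycyclic monoid `Pₙ`. -/
def polyGraph (n : ℕ) : DGraph :=
  ⟨PUnit, Fin n, fun _ => PUnit.unit, fun _ => PUnit.unit⟩

/-! Order `P` as the graph with an edge from `q` to `p` whenever `p ≤ q`, so that paths run
downwards. In any graph inverse semigroup, `v ≤_J w` for vertices iff there is a path from `w`
to `v`: a path `t` gives `v = (v t⁻¹) w (t v⁻¹)`, and conversely the elements whose range is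
reachable from `w` form an ideal containing `w`. Every nonzero `x y⁻¹` is `J`-equivalent to the
vertex `r(x)`, so the vertices represent all nonzero `J`-classes. -/

namespace GPath

variable {G : DGraph}

theorem ext {p q : GPath G} (h₁ : p.start = q.start) (h₂ : p.edges = q.edges) : p = q := by
  cases p; cases q; cases h₁; cases h₂; rfl

theorem isPrefixOf_refl (p : GPath G) : p.IsPrefixOf p := ⟨rfl, List.prefix_refl _⟩

theorem ofVertex_isPrefixOf (p : GPath G) : (ofVertex G p.start).IsPrefixOf p :=
  ⟨rfl, List.nil_prefix⟩

theorem IsPrefixOf.antisymm {p q : GPath G} (h₁ : p.IsPrefixOf q) (h₂ : q.IsPrefixOf p) :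
    p = q :=
  ext h₁.1 (h₁.2.eq_of_length (h₁.2.length_le.antisymm h₂.2.length_le))

theorem append_remainder_self (x : GPath G) {y : GPath G} (h : y.IsPrefixOf y)
    (hxy : x.ran = (y.remainder y h).start) : x.append (y.remainder y h) hxy = x :=
  ext rfl (by simp [append, remainder])

end GPath

theorem GConnected.refl {G : DGraph} (v : G.V) : GConnected G v v :=
  ⟨GPath.ofVertex G v, rfl, rfl⟩

theorem GConnected.trans {G : DGraph} {u v w : G.V} (h₁ : GConnected G u v)
    (h₂ : GConnected G v w) : GConnected G u w := by
  obtain ⟨s, rfl, rfl⟩ := h₁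
  obtain ⟨t, ht, rfl⟩ := h₂
  exact ⟨s.append t ht.symm, rfl, GPath.append_ran _ _ _⟩

theorem GPath.IsPrefixOf.gConnected {G : DGraph} {y p : GPath G} (h : y.IsPrefixOf p) :
    GConnected G y.ran p.ran :=
  ⟨y.remainder p h, rfl, GPath.remainder_ran _ _ _⟩

theorem GISIdeal.mem_of_greenLeJ {G : DGraph} {I : Set (GIS G)} (hI : GISIdeal I)
    {a b : GIS G} (hab : GreenLeJ a b) (hb : b ∈ I) : a ∈ I := by
  rcases hab with rfl | ⟨c, rfl⟩ | ⟨c, rfl⟩ | ⟨c, d, rfl⟩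
  · exact hb
  · exact (hI b hb c).2
  · exact (hI b hb c).1
  · exact (hI _ (hI b hb c).2 d).1

namespace GIS

variable {G : DGraph}

theorem mk_ne_zero (x y : GPath G) (h : x.ran = y.ran) : GIS.mk x y h ≠ 0 := by
  rintro ⟨⟩

theorem mk_mul_mk_of_isPrefixOf {x y p q : GPath G} (hxy : x.ran = y.ran) (hpq : p.ran = q.ran)
    (h : y.IsPrefixOf p) :
    GIS.mk x y hxy * GIS.mk p q hpq =
      GIS.mk (x.append (y.remainder p h) hxy) q
        ((GPath.append_ran _ _ _).trans ((GPath.remainder_ran _ _ _).trans hpq)) := by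
  show gmul _ _ = _
  simp only [gmul, dif_pos h]

theorem mk_mul_mk_of_isPrefixOf' {x y p q : GPath G} (hxy : x.ran = y.ran) (hpq : p.ran = q.ran)
    (h : p.IsPrefixOf y) :
    GIS.mk x y hxy * GIS.mk p q hpq =
      GIS.mk x (q.append (p.remainder y h) hpq.symm)
        (hxy.trans ((GPath.append_ran _ _ _).trans (GPath.remainder_ran _ _ _)).symm) := by
  by_cases h' : y.IsPrefixOf p
  · obtain rfl := h'.antisymm h
    rw [mk_mul_mk_of_isPrefixOf hxy hpq h']
    congr 1
    exacts [GPath.append_remainder_self _ _ _, (GPath.append_remainder_self _ _ _).symm]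
  · show gmul _ _ = _
    simp only [gmul, dif_neg h', dif_pos h]

theorem mk_mul_mk_eq_zero {x y p q : GPath G} (hxy : x.ran = y.ran) (hpq : p.ran = q.ran)
    (h₁ : ¬ y.IsPrefixOf p) (h₂ : ¬ p.IsPrefixOf y) : GIS.mk x y hxy * GIS.mk p q hpq = 0 := by
  show gmul _ _ = _
  simp only [gmul, dif_neg h₁, dif_neg h₂]
  rfl

theorem mk_mul_mk_self {x y q : GPath G} (hxy : x.ran = y.ran) (hyq : y.ran = q.ran) :
    GIS.mk x y hxy * GIS.mk y q hyq = GIS.mk x q (hxy.trans hyq) := by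
  rw [mk_mul_mk_of_isPrefixOf hxy hyq (GPath.isPrefixOf_refl y)]
  congr 1
  exact GPath.append_remainder_self _ _ _

theorem mk_mul_vertexEl {x y : GPath G} (h : x.ran = y.ran) {w : G.V} (hw : y.start = w) :
    GIS.mk x y h * vertexEl G w = GIS.mk x y h := by
  subst hw
  rw [vertexEl, mk_mul_mk_of_isPrefixOf' h rfl (GPath.ofVertex_isPrefixOf y)]
  congr 1

theorem vertexEl_ne_zero (v : G.V) : vertexEl G v ≠ 0 :=
  mk_ne_zero _ _ _

/-- `0` is included so that these elements form an ideal. -/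
def RangeReachableFrom (v : G.V) : GIS G → Prop
  | zero => True
  | mk x _ _ => GConnected G v x.ran

theorem RangeReachableFrom.mul_right {v : G.V} {a : GIS G} (ha : a.RangeReachableFrom v)
    (b : GIS G) : (a * b).RangeReachableFrom v := by
  rcases a with _ | ⟨x, y, hxy⟩
  · trivial
  rcases b with _ | ⟨p, q, hpq⟩
  · trivial
  by_cases h₁ : y.IsPrefixOf p
  · rw [mk_mul_mk_of_isPrefixOf hxy hpq h₁]
    show GConnected G v (x.append (y.remainder p h₁) hxy).ran
    rw [GPath.append_ran x (y.remainder p h₁) hxy, GPath.remainder_ran]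
    exact ha.trans (hxy ▸ h₁.gConnected)
  by_cases h₂ : p.IsPrefixOf y
  · rw [mk_mul_mk_of_isPrefixOf' hxy hpq h₂]
    exact ha
  · rw [mk_mul_mk_eq_zero hxy hpq h₁ h₂]; trivial

theorem RangeReachableFrom.mul_left {v : G.V} {b : GIS G} (hb : b.RangeReachableFrom v)
    (a : GIS G) : (a * b).RangeReachableFrom v := by
  rcases a with _ | ⟨x, y, hxy⟩
  · trivial
  rcases b with _ | ⟨p, q, hpq⟩
  · trivial
  by_cases h₁ : y.IsPrefixOf p
  · rw [mk_mul_mk_of_isPrefixOf hxy hpq h₁]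
    show GConnected G v (x.append (y.remainder p h₁) hxy).ran
    rw [GPath.append_ran x (y.remainder p h₁) hxy, GPath.remainder_ran]
    exact hb
  by_cases h₂ : p.IsPrefixOf y
  · rw [mk_mul_mk_of_isPrefixOf' hxy hpq h₂]
    exact hb.trans (hxy ▸ h₂.gConnected)
  · rw [mk_mul_mk_eq_zero hxy hpq h₁ h₂]; trivial

theorem gisIdeal_rangeReachableFrom (v : G.V) :
    GISIdeal {a : GIS G | a.RangeReachableFrom v} :=
  fun _ ha c => ⟨ha.mul_right c, ha.mul_left c⟩

theorem greenEqJ_mk_vertexEl (x y : GPath G) (h : x.ran = y.ran) :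
    GreenEqJ (GIS.mk x y h) (vertexEl G x.ran) := by
  set r := GPath.ofVertex G x.ran
  have hr : r.ran = x.ran := GPath.ofVertex_ran G x.ran
  constructor
  · refine Or.inr (Or.inr (Or.inr ⟨GIS.mk x r hr.symm, GIS.mk r y (hr.trans h), ?_⟩))
    rw [mk_mul_vertexEl (w := x.ran) _ rfl, mk_mul_mk_self]
  · refine Or.inr (Or.inr (Or.inr ⟨GIS.mk r x hr, GIS.mk y r (h.symm.trans hr.symm), ?_⟩))
    rw [mk_mul_mk_self, mk_mul_mk_self]
    rfl

theorem greenLeJ_vertexEl_iff {v w : G.V} :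
    GreenLeJ (vertexEl G v) (vertexEl G w) ↔ GConnected G w v := by
  constructor
  · intro h
    exact (gisIdeal_rangeReachableFrom w).mem_of_greenLeJ h (GConnected.refl w)
  · rintro ⟨t, rfl, rfl⟩
    have hr := GPath.ofVertex_ran G t.ran
    refine Or.inr (Or.inr (Or.inr ⟨GIS.mk (GPath.ofVertex G t.ran) t hr,
      GIS.mk t (GPath.ofVertex G t.ran) hr.symm, ?_⟩))
    rw [mk_mul_vertexEl _ rfl, mk_mul_mk_self]
    rfl

end GIS

abbrev DGraph.ofPreorder (P : Type u) [Preorder P] : DGraph.{u} where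
  V := P
  Ed := {e : P × P // e.1 ≤ e.2}
  src e := e.1.2
  rng e := e.1.1

theorem DGraph.ofPreorder_ranAux_le {P : Type u} [Preorder P] :
    ∀ (v : P) (l : List (ofPreorder P).Ed), (ofPreorder P).Chain v l →
      (ofPreorder P).ranAux v l ≤ v
  | _, [], _ => le_rfl
  | _, e :: es, ⟨rfl, hc⟩ => (ofPreorder_ranAux_le _ es hc).trans e.2

theorem DGraph.gConnected_ofPreorder_iff {P : Type u} [Preorder P] {p q : P} :
    GConnected (ofPreorder P) q p ↔ p ≤ q := by
  constructor
  · rintro ⟨t, rfl, rfl⟩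
    exact ofPreorder_ranAux_le t.start t.edges t.chain
  · intro h
    exact ⟨GPath.ofEdge (ofPreorder P) ⟨(p, q), h⟩, rfl, rfl⟩

/-- Every partially ordered set is order-isomorphic to the set of nonzero
`J`-classes of `G(E)`, ordered by `≤_J`, for some directed graph `E`. -/
theorem stmt9 (P : Type u) [PartialOrder P] :
    ∃ (G : DGraph.{u}) (F : P → GIS G),
      (∀ p : P, F p ≠ 0) ∧
      (∀ p q : P, p ≤ q ↔ GreenLeJ (F p) (F q)) ∧
      (∀ mu : GIS G, mu ≠ 0 → ∃ p : P, GreenEqJ mu (F p)) := by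
  refine ⟨DGraph.ofPreorder P, vertexEl (DGraph.ofPreorder P), fun _ => GIS.vertexEl_ne_zero _,
    fun p q => ?_, ?_⟩
  · rw [GIS.greenLeJ_vertexEl_iff, DGraph.gConnected_ofPreorder_iff]
  · rintro (_ | ⟨x, y, h⟩) hmu
    · exact absurd rfl hmu
    · exact ⟨x.ran, GIS.greenEqJ_mk_vertexEl x y h⟩
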